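/- Let X be a compact Priestley space with partial order ≤, let i : X → X be an antitone map, and let + be a partial binary operation defined exactly on D₊ := {(x,y) ∈ X × X | y ≤ i(x)}, which is order-preserving in both coordinates (if (x,y) ∈ D₊, x' ≤ x and y' ≤ y then x' + y' ≤ x + y) and expanding (x ≤ x + y for all (x,y) ∈ D₊). Assume that for every x ∈ X the set {x + w | w ≤ i(x)} is totally ordered, and that for every z ≥ x there exists k ≤ i(x) such that for all w ≤ i(x): x + w ≤ z if and only if w ≤ k. Let ⋆ be a partial binary operation defined exactly on D⋆ := {(x,y) ∈ X × X | i(x) ≰ y}, and assume that for every (x,y) ∈ D⋆, x ⋆ y is the greatest lower bound in X of the set {x + w | w ≤ i(x) and w ≰ y}. Then for all clopen lower sets a, b ⊆ X with b nonempty: f₊(a, b) = f⋆(a, b). -/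

import Mathlib

def fplus {X : Type*} [Preorder X] (i : X → X) (p : X → X → X) (u v : Set X) : Set X :=
  {x | ∃ w, w ≤ i x ∧ w ∉ v ∧ p x w ∈ u}

def fstar {X : Type*} [Preorder X] (i : X → X) (s : X → X → X) (u v : Set X) : Set X :=
  {x | ∀ y ∈ v, ¬ i x ≤ y ∧ s x y ∈ u}

/-!
Write `x + w` for `p x w` and `x ⋆ y` for `s x y`. For `x ∈ f₊(a, b)` with witness `w ∉ b`, the
lower set `b` makes `w ≰ y` for every `y ∈ b`, so `x ⋆ y ≤ x + w ∈ a`. Conversely, let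
`x ∈ f⋆(a, b)`. For each `y ∈ b` the infimum `x ⋆ y` of the chain `{x + w | w ≤ i x, w ≰ y}` lies
in the open lower set `a`; since the sets `Iic t \ a` are closed, compactness puts some `x + w_y`
in `a`. The open sets `{y | w_y ≰ y}` cover the compact set `b`, so finitely many `w_j` suffice.
If `x + w_m` is the largest of the `x + w_j`, the element `k ≤ i x` with
`x + w ≤ x + w_m ↔ w ≤ k` lies above every `w_j`, hence outside `b`, and `x + k ≤ x + w_m ∈ a`.
-/

open Set

section

variable {X : Type*}

instance PriestleySpace.toClosedIciTopology [TopologicalSpace X] [Preorder X]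
    [PriestleySpace X] : ClosedIciTopology X where
  isClosed_Ici x := by
    refine isOpen_compl_iff.mp <| isOpen_iff_forall_mem_open.mpr fun y hy ↦ ?_
    obtain ⟨U, hUc, hUl, hyU, hxU⟩ := exists_isClopen_lower_of_not_le hy
    exact ⟨U, fun z hzU hxz ↦ hyU (hUl hxz hzU), hUc.isOpen, hxU⟩

instance PriestleySpace.toClosedIicTopology [TopologicalSpace X] [Preorder X]
    [PriestleySpace X] : ClosedIicTopology X where
  isClosed_Iic x := by
    refine isOpen_compl_iff.mp <| isOpen_iff_forall_mem_open.mpr fun y hy ↦ ?_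
    obtain ⟨U, hUc, hUu, hyU, hxU⟩ := exists_isClopen_upper_of_not_le hy
    exact ⟨U, fun z hzU hzx ↦ hxU (hUu hzx hzU), hUc.isOpen, hyU⟩

theorem IsChain.exists_isGreatest_of_finite [Preorder X] {S : Set X} (hc : IsChain (· ≤ ·) S)
    (hfin : S.Finite) (hne : S.Nonempty) : ∃ m, IsGreatest S m := by
  obtain ⟨m, hmS, hmax⟩ := hfin.exists_maximal hne
  exact ⟨m, hmS, fun t htS ↦ (hc.total htS hmS).elim id (hmax htS)⟩

theorem IsChain.exists_mem_of_isGLB_mem [TopologicalSpace X] [Preorder X] [CompactSpace X]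
    [ClosedIicTopology X] {S : Set X} {z : X} {a : Set X} (hc : IsChain (· ≤ ·) S)
    (hne : S.Nonempty) (hz : IsGLB S z) (hao : IsOpen a) (hal : IsLowerSet a) (hza : z ∈ a) :
    ∃ t ∈ S, t ∈ a := by
  by_contra! hSa
  have : Nonempty S := hne.to_subtype
  have hdir : Directed (· ⊇ ·) fun t : S ↦ Iic (t : X) ∩ aᶜ := fun t₁ t₂ ↦ by
    rcases hc.total t₁.2 t₂.2 with h | h
    · exact ⟨t₁, subset_rfl, inter_subset_inter_left _ (Iic_subset_Iic.mpr h)⟩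
    · exact ⟨t₂, inter_subset_inter_left _ (Iic_subset_Iic.mpr h), subset_rfl⟩
  have hclosed (t : S) : IsClosed (Iic (t : X) ∩ aᶜ) := isClosed_Iic.inter hao.isClosed_compl
  obtain ⟨l, hl⟩ := IsCompact.nonempty_iInter_of_directed_nonempty_isCompact_isClosed _ hdir
    (fun t ↦ ⟨t, le_rfl, hSa t t.2⟩) (fun t ↦ (hclosed t).isCompact) hclosed
  have hlS : l ∈ lowerBounds S := fun t ht ↦ (mem_iInter.mp hl ⟨t, ht⟩).1
  exact (mem_iInter.mp hl (Classical.arbitrary S)).2 (hal (hz.2 hlS) hza)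

theorem IsCompact.exists_finite_forall_exists_not_le [TopologicalSpace X] [Preorder X]
    [ClosedIciTopology X] {b W : Set X} (hb : IsCompact b) (h : ∀ y ∈ b, ∃ w ∈ W, ¬ w ≤ y) :
    ∃ F ⊆ W, F.Finite ∧ ∀ y ∈ b, ∃ w ∈ F, ¬ w ≤ y := by
  obtain ⟨F, hFW, hF, hcover⟩ := hb.elim_finite_subcover_image (c := fun w ↦ (Ici w)ᶜ)
    (fun w _ ↦ isClosed_Ici.isOpen_compl) fun y hy ↦ by simpa using h y hy
  exact ⟨F, hFW, hF, fun y hy ↦ by simpa using hcover hy⟩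

section PartialOperations

variable [Preorder X] {i : X → X} {p s : X → X → X} {a b : Set X}

theorem fplus_subset_fstar
    (hglb : ∀ x y : X, ¬ i x ≤ y →
      IsGLB {z : X | ∃ w, w ≤ i x ∧ ¬ w ≤ y ∧ z = p x w} (s x y))
    (hal : IsLowerSet a) (hbl : IsLowerSet b) : fplus i p a b ⊆ fstar i s a b := by
  rintro x ⟨w, hwi, hwb, hwa⟩ y hy
  have hwy : ¬ w ≤ y := fun h ↦ hwb (hbl h hy)
  have hiy : ¬ i x ≤ y := fun h ↦ hwy (hwi.trans h)
  exact ⟨hiy, hal ((hglb x y hiy).1 ⟨w, hwi, hwy, rfl⟩) hwa⟩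

theorem exists_not_le_of_mem_fstar [TopologicalSpace X] [CompactSpace X] [ClosedIicTopology X]
    (hchain : ∀ x : X, IsChain (· ≤ ·) {z : X | ∃ w, w ≤ i x ∧ z = p x w})
    (hglb : ∀ x y : X, ¬ i x ≤ y →
      IsGLB {z : X | ∃ w, w ≤ i x ∧ ¬ w ≤ y ∧ z = p x w} (s x y))
    (hao : IsOpen a) (hal : IsLowerSet a) {x y : X} (hx : x ∈ fstar i s a b) (hy : y ∈ b) :
    ∃ w ∈ {w | w ≤ i x ∧ p x w ∈ a}, ¬ w ≤ y := by
  obtain ⟨hiy, hsa⟩ := hx y hy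
  have hc : IsChain (· ≤ ·) {z : X | ∃ w, w ≤ i x ∧ ¬ w ≤ y ∧ z = p x w} :=
    (hchain x).mono <| by rintro _ ⟨w, hwi, -, rfl⟩; exact ⟨w, hwi, rfl⟩
  obtain ⟨_, ⟨w, hwi, hwy, rfl⟩, hwa⟩ :=
    hc.exists_mem_of_isGLB_mem ⟨_, i x, le_rfl, hiy, rfl⟩ (hglb x y hiy) hao hal hsa
  exact ⟨w, ⟨hwi, hwa⟩, hwy⟩

theorem exists_upper_bound_of_finite
    (hexp : ∀ x y : X, y ≤ i x → x ≤ p x y)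
    (hchain : ∀ x : X, IsChain (· ≤ ·) {z : X | ∃ w, w ≤ i x ∧ z = p x w})
    (hadj : ∀ x z : X, x ≤ z → ∃ k, k ≤ i x ∧ ∀ w, w ≤ i x → (p x w ≤ z ↔ w ≤ k))
    (hal : IsLowerSet a) {x : X} {F : Set X} (hFW : F ⊆ {w | w ≤ i x ∧ p x w ∈ a})
    (hF : F.Finite) (hne : F.Nonempty) : ∃ k, k ≤ i x ∧ p x k ∈ a ∧ ∀ w ∈ F, w ≤ k := by
  have hc : IsChain (· ≤ ·) (p x '' F) :=
    (hchain x).mono <| by rintro _ ⟨w, hwF, rfl⟩; exact ⟨w, (hFW hwF).1, rfl⟩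
  obtain ⟨_, ⟨m, hmF, rfl⟩, hmax⟩ := hc.exists_isGreatest_of_finite (hF.image _) (hne.image _)
  obtain ⟨k, hki, hk⟩ := hadj x (p x m) (hexp x m (hFW hmF).1)
  refine ⟨k, hki, hal ((hk k hki).2 le_rfl) (hFW hmF).2, fun w hwF ↦ ?_⟩
  exact (hk w (hFW hwF).1).1 (hmax ⟨w, hwF, rfl⟩)

theorem fstar_subset_fplus [TopologicalSpace X] [CompactSpace X] [PriestleySpace X]
    (hexp : ∀ x y : X, y ≤ i x → x ≤ p x y)
    (hchain : ∀ x : X, IsChain (· ≤ ·) {z : X | ∃ w, w ≤ i x ∧ z = p x w})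
    (hadj : ∀ x z : X, x ≤ z → ∃ k, k ≤ i x ∧ ∀ w, w ≤ i x → (p x w ≤ z ↔ w ≤ k))
    (hglb : ∀ x y : X, ¬ i x ≤ y →
      IsGLB {z : X | ∃ w, w ≤ i x ∧ ¬ w ≤ y ∧ z = p x w} (s x y))
    (hao : IsOpen a) (hal : IsLowerSet a) (hbc : IsClosed b) (hbne : b.Nonempty) :
    fstar i s a b ⊆ fplus i p a b := by
  intro x hx
  obtain ⟨F, hFW, hF, hFb⟩ := hbc.isCompact.exists_finite_forall_exists_not_le
    fun y hy ↦ exists_not_le_of_mem_fstar hchain hglb hao hal hx hy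
  have hFne : F.Nonempty := by
    obtain ⟨w, hwF, -⟩ := hFb _ hbne.some_mem
    exact ⟨w, hwF⟩
  obtain ⟨k, hki, hka, hFk⟩ := exists_upper_bound_of_finite hexp hchain hadj hal hFW hF hFne
  refine ⟨k, hki, fun hkb ↦ ?_, hka⟩
  obtain ⟨w, hwF, hwk⟩ := hFb k hkb
  exact hwk (hFk w hwF)

end PartialOperations

end

theorem stmt13 {X : Type*} [TopologicalSpace X] [PartialOrder X] [PriestleySpace X]
    [CompactSpace X]
    (i : X → X) (p : X → X → X)
    (hexp : ∀ x y : X, y ≤ i x → x ≤ p x y)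
    (hchain : ∀ x : X, IsChain (· ≤ ·) {z : X | ∃ w, w ≤ i x ∧ z = p x w})
    (hadj : ∀ x z : X, x ≤ z → ∃ k, k ≤ i x ∧ ∀ w, w ≤ i x → (p x w ≤ z ↔ w ≤ k))
    (s : X → X → X)
    (hglb : ∀ x y : X, ¬ i x ≤ y →
      IsGLB {z : X | ∃ w, w ≤ i x ∧ ¬ w ≤ y ∧ z = p x w} (s x y))
    (a b : Set X) (hac : IsClopen a) (hal : IsLowerSet a)
    (hbc : IsClopen b) (hbl : IsLowerSet b) (hbne : b.Nonempty) :
    fplus i p a b = fstar i s a b :=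
  (fplus_subset_fstar hglb hal hbl).antisymm
    (fstar_subset_fplus hexp hchain hadj hglb hac.isOpen hal hbc.isClosed hbne)
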